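/- arXiv:1807.08418 — 2 statements merged into one kernel-verified Lean document; each statement's English description precedes it below -/
import Mathlib

section
/- Let C be a strongly cyclic code of length n and dimension k over F_q with exactly s distinct nonzero weights. Then, as real numbers, s ≤ 2·(1 − 1/q)·q^{k/2}. -/
/-- The cyclic shift `ρ` on words of length `n`: `(ρ c) i = c (i - 1)`. -/
def cshift {F : Type*} {n : ℕ} (c : ZMod n → F) : ZMod n → F := fun i => c (i - 1)

/-- Hamming weight: the number of nonzero coordinates. -/
noncomputable def hwt {ι F : Type*} [Zero F] (c : ι → F) : ℕ := Set.ncard {i | c i ≠ 0}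

/-- The period of a codeword: the smallest positive `t` with `ρ^t c = c`. -/
noncomputable def cperiod {F : Type*} {n : ℕ} (c : ZMod n → F) : ℕ :=
  sInf {t : ℕ | 0 < t ∧ cshift^[t] c = c}

section aux
variable {F : Type*} {n : ℕ}

lemma cshift_injective : Function.Injective (cshift (F := F) (n := n)) := by
  intro a b h
  funext i
  have := congrFun h (i + 1)
  simpa [cshift] using this

lemma cshift_zero [Zero F] : cshift (0 : ZMod n → F) = 0 := rfl

lemma hwt_cshift [Zero F] (c : ZMod n → F) : hwt (cshift c) = hwt c := by
  unfold hwt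
  have himg : {i : ZMod n | cshift c i ≠ 0} = (fun i => i + 1) '' {i | c i ≠ 0} := by
    ext j
    simp only [Set.mem_image, Set.mem_setOf_eq, cshift]
    constructor
    · intro h; exact ⟨j - 1, h, by ring⟩
    · rintro ⟨i, hi, rfl⟩; simpa using hi
  rw [himg, Set.ncard_image_of_injective _ (add_left_injective 1)]

lemma hwt_cshift_iter [Zero F] (c : ZMod n → F) (t : ℕ) : hwt (cshift^[t] c) = hwt c := by
  induction t with
  | zero => rfl
  | succ t ih => rw [Function.iterate_succ_apply', hwt_cshift, ih]

lemma cshift_iter_injective (t : ℕ) :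
    Function.Injective (cshift (F := F) (n := n))^[t] :=
  Function.Injective.iterate cshift_injective t

lemma shifts_distinct {c : ZMod n → F} (hper : cperiod c = n) {i j : ℕ}
    (hi : i < n) (hj : j < n) (h : cshift^[i] c = cshift^[j] c) : i = j := by
  by_contra hne
  wlog hij : i < j generalizing i j
  · exact this hj hi h.symm (Ne.symm hne) (by omega)
  have h2 : cshift^[i] (cshift^[j - i] c) = cshift^[i] c := by
    rw [← Function.iterate_add_apply, show i + (j - i) = j by omega]
    exact h.symm
  have h3 : cshift^[j - i] c = c := cshift_iter_injective i h2
  have : cperiod c ≤ j - i := Nat.sInf_le ⟨by omega, h3⟩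
  omega

end aux

/-- If `C` is an `[n,k]_q` strongly cyclic code with exactly `s` nonzero weights, then
`s ≤ 2·(1 - 1/q)·q^{k/2}` as real numbers. -/
theorem stmt4 {F : Type*} [Field F] [Fintype F] {n k : ℕ} [NeZero n]
    (q : ℕ) (hq : q = Fintype.card F)
    (C : Submodule F (ZMod n → F)) (hcyc : ∀ c ∈ C, cshift c ∈ C)
    (hstrong : ∀ c ∈ C, c ≠ 0 → cperiod c = n)
    (hk : Module.finrank F C = k)
    (s : ℕ) (hs : s = Set.ncard {w : ℕ | ∃ c ∈ C, c ≠ 0 ∧ hwt c = w}) :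
    (s : ℝ) ≤ 2 * (1 - 1 / (q : ℝ)) * (q : ℝ) ^ ((k : ℝ) / 2) := by
  classical
  have hq2 : 2 ≤ q := hq ▸ Fintype.one_lt_card
  set W : Set ℕ := {w : ℕ | ∃ c ∈ C, c ≠ 0 ∧ hwt c = w} with hW
  have hWsub : W ⊆ Set.Icc 1 n := by
    rintro w ⟨c, hc, hc0, rfl⟩
    constructor
    · obtain ⟨i, hi⟩ := Function.ne_iff.mp hc0
      have hne : {i : ZMod n | c i ≠ 0}.Nonempty := ⟨i, by simpa using hi⟩
      exact (Set.ncard_pos (Set.toFinite _)).mpr hne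
    · calc hwt c ≤ (Set.univ : Set (ZMod n)).ncard :=
             Set.ncard_le_ncard (Set.subset_univ _) (Set.toFinite _)
        _ = n := by rw [Set.ncard_univ, Nat.card_zmod]
  have hWfin : W.Finite := (Set.finite_Icc 1 n).subset hWsub
  have hsn : s ≤ n := by
    rw [hs]
    calc W.ncard ≤ (Set.Icc 1 n).ncard := Set.ncard_le_ncard hWsub (Set.finite_Icc 1 n)
      _ = n := by rw [← Finset.coe_Icc, Set.ncard_coe_finset, Nat.card_Icc]; omega
  have hcard : Fintype.card C = q ^ k := by
    rw [hq, ← hk]; exact Module.card_eq_pow_finrank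
  have hchoose : ∀ w ∈ W, ∃ c, c ∈ C ∧ c ≠ 0 ∧ hwt c = w := by
    rintro w ⟨c, hc, hc0, hw⟩; exact ⟨c, hc, hc0, hw⟩
  set T : Set (ZMod n → F) := {c | c ∈ C ∧ c ≠ 0} with hT
  have hiterC : ∀ c ∈ C, ∀ t : ℕ, cshift^[t] c ∈ C := by
    intro c hc t
    induction t with
    | zero => exact hc
    | succ t ih => rw [Function.iterate_succ_apply']; exact hcyc _ ih
  -- key counting: s * n ≤ T.ncard
  have key : s * n ≤ T.ncard := by
    have f : ∀ p : ↥(hWfin.toFinset) × ZMod n, ∃ c, c ∈ T ∧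
        hwt c = (p.1 : ℕ) ∧ c = cshift^[p.2.val] (Classical.choose (hchoose p.1
          (hWfin.mem_toFinset.mp p.1.2))) := by
      rintro ⟨⟨w, hw⟩, j⟩
      obtain ⟨hc, hc0, hhwt⟩ := Classical.choose_spec (hchoose w (hWfin.mem_toFinset.mp hw))
      set c := Classical.choose (hchoose w (hWfin.mem_toFinset.mp hw))
      refine ⟨cshift^[j.val] c, ⟨hiterC c hc _, ?_⟩, by rw [hwt_cshift_iter]; exact hhwt, rfl⟩
      intro h0
      apply hc0
      have : cshift^[j.val] c = cshift^[j.val] 0 := by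
        rw [h0, Function.iterate_fixed cshift_zero]
      exact cshift_iter_injective _ this
    choose g hg1 hg2 hg3 using f
    have hginj : Function.Injective g := by
      rintro ⟨⟨w, hw⟩, j⟩ ⟨⟨w', hw'⟩, j'⟩ hgg
      have hww : w = w' := ((hg2 (⟨⟨w, hw⟩, j⟩)).symm.trans
        ((congrArg hwt hgg).trans (hg2 (⟨⟨w', hw'⟩, j'⟩))))
      subst hww
      have hc := (Classical.choose_spec (hchoose w (hWfin.mem_toFinset.mp hw)))
      have hper : cperiod (Classical.choose (hchoose w (hWfin.mem_toFinset.mp hw))) = n :=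
        hstrong _ hc.1 hc.2.1
      have hiter := hg3 (⟨⟨w, hw⟩, j⟩)
      rw [hgg, hg3 (⟨⟨w, hw'⟩, j'⟩)] at hiter
      have hjj : j'.val = j.val := shifts_distinct hper (ZMod.val_lt _) (ZMod.val_lt _) hiter
      have hj : j = j' := ZMod.natCast_rightInverse.injective hjj.symm
      subst hj
      exact Prod.ext (Subtype.ext rfl) rfl
    have hinj2 : Function.Injective (fun p => (⟨g p, hg1 p⟩ : T)) := by
      intro p p' h
      exact hginj (congrArg Subtype.val h)
    have hle := Nat.card_le_card_of_injective _ hinj2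
    rwa [Nat.card_prod, Nat.card_eq_fintype_card (α := ↥(hWfin.toFinset)),
      Fintype.card_coe, ← Set.ncard_eq_toFinset_card W hWfin, Nat.card_zmod,
      Nat.card_coe_set_eq, ← hs] at hle
  -- T.ncard < q ^ k
  have hTlt : T.ncard < q ^ k := by
    have hss : T ⊂ (C : Set (ZMod n → F)) := by
      constructor
      · intro c hc; exact hc.1
      · intro hsub
        have h0 : (0 : ZMod n → F) ∈ T := hsub C.zero_mem
        exact h0.2 rfl
    calc T.ncard < (C : Set (ZMod n → F)).ncard :=
           Set.ncard_lt_ncard hss (Set.toFinite _)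
      _ = q ^ k := by
          rw [← Nat.card_coe_set_eq, Nat.card_eq_fintype_card]
          exact hcard
  have hsq : s * s ≤ q ^ k := by
    have : s * n < q ^ k := lt_of_le_of_lt key hTlt
    nlinarith
  -- pass to reals
  have hq0 : (0:ℝ) < (q:ℝ) := by positivity
  have hsq' : (s:ℝ) ^ 2 ≤ ((q:ℝ) ^ ((k:ℝ)/2)) ^ 2 := by
    have h1 : ((q:ℝ) ^ ((k:ℝ)/2)) ^ 2 = (q:ℝ) ^ (k:ℕ) := by
      rw [← Real.rpow_natCast ((q:ℝ) ^ ((k:ℝ)/2)) 2, ← Real.rpow_mul hq0.le,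
        ← Real.rpow_natCast (q:ℝ) k]
      norm_num
    rw [h1]
    calc (s:ℝ) ^ 2 = ((s * s : ℕ) : ℝ) := by push_cast; ring
      _ ≤ ((q ^ k : ℕ) : ℝ) := by exact_mod_cast hsq
      _ = (q:ℝ) ^ (k:ℕ) := by push_cast; ring
  have hsle : (s:ℝ) ≤ (q:ℝ) ^ ((k:ℝ)/2) := by
    have hpow : (0:ℝ) ≤ (q:ℝ) ^ ((k:ℝ)/2) := Real.rpow_nonneg hq0.le _
    nlinarith
  have hfac : (1:ℝ) ≤ 2 * (1 - 1 / (q:ℝ)) := by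
    have hq2' : (2:ℝ) ≤ (q:ℝ) := by exact_mod_cast hq2
    have : 1 / (q:ℝ) ≤ 1 / 2 := by
      apply one_div_le_one_div_of_le <;> linarith
    linarith
  calc (s:ℝ) ≤ (q:ℝ) ^ ((k:ℝ)/2) := hsle
    _ ≤ 2 * (1 - 1 / (q:ℝ)) * (q:ℝ) ^ ((k:ℝ)/2) := by
        nlinarith [Real.rpow_nonneg hq0.le ((k:ℝ)/2)]
end

section
/- Let q be a prime power, m ≥ 1 a positive integer, and r an integer with 0 ≤ r ≤ (q−3)/2. Then the weight set of the q-ary Reed–Muller code RM_q(m(q−1)−r−1, m) equals {0} ∪ {r+2, r+3, …, q^m}. -/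
/-- The `q`-ary Reed–Muller code of order `s` in `m` variables over the field `F` of
cardinality `q`: all evaluation vectors, on the points of `F^m`, of `m`-variate
polynomials of total degree at most `s`. -/
def RMcode (F : Type*) [CommSemiring F] (s m : ℕ) : Set ((Fin m → F) → F) :=
  {c | ∃ f : MvPolynomial (Fin m) F, f.totalDegree ≤ s ∧ ∀ P, MvPolynomial.eval P f = c P}

/-!
Every codeword has weight at most `q ^ m`. For the lower bound, let `f` have degree at most
`m (q - 1) - r - 1` and at most `r + 1` nonzero values, one of them at `P`. Multiplying `f` by
at most `r` affine linear forms, each vanishing at one of the other nonzero points but not at `P`,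
gives a polynomial of degree `< m (q - 1)` that is nonzero exactly at `P`; but the values of such a
polynomial sum to zero over `F ^ m` (the lemma behind Chevalley–Warning).

Conversely, write `w ∈ [r + 2, q ^ m]` as a sum of `q ^ (m - 1)` parts `t_y`, indexed by
`y ∈ F ^ (m - 1)`, each `0` or in `[r + 2, q]`: greedily take parts `q`, and split a last
remainder in `(q, q + r + 2)` into `r + 2` and a part `> q - (r + 2) ≥ r + 1`. On the line
`{(a, y) : a ∈ F}` take a univariate polynomial of degree `≤ q - r - 2` with exactly `t_y`
nonzero values, and glue these lines with the indicator polynomials of the points `y`, of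
degree `(m - 1) (q - 1)`.
-/

open MvPolynomial Finset

section HammingWeight

variable {ι α F : Type*} [Zero F]

@[simp]
theorem hwt_zero : hwt (0 : ι → F) = 0 := by
  simp [hwt]

variable [Fintype ι]

theorem hwt_eq_sum [DecidableEq F] (c : ι → F) : hwt c = ∑ i, if c i = 0 then 0 else 1 := by
  rw [hwt, Set.ncard_eq_toFinset_card', Set.toFinset_ofPred, card_filter]
  exact sum_congr rfl fun i _ => by split_ifs <;> simp_all

theorem hwt_le_card (c : ι → F) : hwt c ≤ Fintype.card ι :=
  (Set.ncard_le_ncard (Set.subset_univ _)).trans_eq (by simp [Set.ncard_univ])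

theorem hwt_comp_equiv [Fintype α] (c : ι → F) (e : α ≃ ι) : hwt (c ∘ e) = hwt c := by
  classical
  simp only [hwt_eq_sum, Function.comp_apply]
  exact Fintype.sum_equiv e _ _ fun _ => rfl

theorem hwt_uncurry [Fintype α] (c : α → ι → F) :
    hwt (Function.uncurry c) = ∑ a, hwt (c a) := by
  classical
  simp only [hwt_eq_sum]
  exact Fintype.sum_prod_type _

end HammingWeight

section MinimumWeight

variable {σ K : Type*}

theorem exists_totalDegree_le_card_eval_eq_zero [CommRing K] [IsDomain K]
    (S : Finset (σ → K)) {P : σ → K} (hP : P ∉ S) :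
    ∃ h : MvPolynomial σ K, h.totalDegree ≤ #S ∧ (∀ Q ∈ S, eval Q h = 0) ∧ eval P h ≠ 0 := by
  classical
  induction S using Finset.induction_on with
  | empty => exact ⟨1, by simp, by simp, by simp⟩
  | insert Q S hQS ih =>
    obtain ⟨h, hdeg, hS, hPh⟩ := ih fun hPS => hP (mem_insert_of_mem hPS)
    obtain ⟨i, hi⟩ : ∃ i, P i ≠ Q i := Function.ne_iff.mp fun hPQ => hP (hPQ ▸ mem_insert_self Q S)
    refine ⟨(X i - C (Q i)) * h, ?_, ?_, ?_⟩
    · calc ((X i - C (Q i)) * h).totalDegree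
          ≤ (X i - C (Q i) : MvPolynomial σ K).totalDegree + h.totalDegree := totalDegree_mul _ _
        _ ≤ 1 + #S := add_le_add ((totalDegree_sub_C_le _ _).trans (totalDegree_X i).le) hdeg
        _ = #(insert Q S) := by rw [card_insert_of_notMem hQS, add_comm]
    · simp only [mem_insert, forall_eq_or_imp, map_mul, map_sub, eval_X, eval_C, sub_self,
        zero_mul, true_and]
      exact fun R hR => by rw [hS R hR, mul_zero]
    · simpa [sub_eq_zero, hi] using hPh

variable [Field K] [Fintype K] [Fintype σ] [DecidableEq σ]

theorem le_totalDegree_of_eval_eq_zero_of_ne (g : MvPolynomial σ K) (P : σ → K)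
    (hP : eval P g ≠ 0) (h0 : ∀ x ≠ P, eval x g = 0) :
    (Fintype.card K - 1) * Fintype.card σ ≤ g.totalDegree := by
  by_contra! hg
  apply hP
  rw [← sum_eval_eq_zero g hg, Fintype.sum_eq_single P h0]

theorem card_sub_one_mul_lt_totalDegree_add_hwt (f : MvPolynomial σ K) (hf : ∃ P, eval P f ≠ 0) :
    (Fintype.card K - 1) * Fintype.card σ < f.totalDegree + hwt fun x => eval x f := by
  classical
  obtain ⟨P, hP⟩ := hf
  set N := ({x | eval x f ≠ 0} : Finset (σ → K))
  have hN : hwt (fun x => eval x f) = #N := by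
    rw [hwt, Set.ncard_eq_toFinset_card', Set.toFinset_ofPred]
  have hPN : P ∈ N := by simpa [N] using hP
  obtain ⟨h, hdeg, hvanish, hPh⟩ := exists_totalDegree_le_card_eval_eq_zero (N.erase P)
    (notMem_erase P N)
  have hfh := le_totalDegree_of_eval_eq_zero_of_ne (f * h) P (by simp [hP, hPh]) fun x hx => by
    by_cases hxN : x ∈ N
    · simp [hvanish x (mem_erase.mpr ⟨hx, hxN⟩)]
    · simp_all [N]
  have := totalDegree_mul f h
  have := card_erase_of_mem hPN
  have := card_pos.mpr ⟨P, hPN⟩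
  omega

end MinimumWeight

theorem Polynomial.totalDegree_toMvPolynomial_le {R σ : Type*} [CommSemiring R]
    (p : Polynomial R) (i : σ) : (p.toMvPolynomial i).totalDegree ≤ p.natDegree := by
  conv_lhs => rw [p.as_sum_range' (p.natDegree + 1) (Nat.lt_succ_self _)]
  rw [map_sum]
  refine (totalDegree_finsetSum _ _).trans (Finset.sup_le fun k hk => ?_)
  rw [← Polynomial.C_mul_X_pow_eq_monomial, map_mul, map_pow, Polynomial.toMvPolynomial_C,
    Polynomial.toMvPolynomial_X, MvPolynomial.C_mul_X_pow_eq_monomial]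
  refine (totalDegree_monomial_le _ _).trans ?_
  simpa [Nat.lt_succ_iff] using mem_range.mp hk

section Construction

variable {K : Type*} [Field K] [Fintype K]

theorem MvPolynomial.totalDegree_indicator_le {σ : Type*} [Fintype σ] (a : σ → K) :
    (indicator a).totalDegree ≤ (Fintype.card K - 1) * Fintype.card σ :=
  (totalDegree_le_degrees_card _).trans <| (Multiset.card_le_card (degrees_indicator a)).trans
    (by simp [mul_comm])

theorem exists_eval_eq_eval_tail {n d : ℕ} (p : (Fin n → K) → Polynomial K)
    (hp : ∀ y, (p y).natDegree ≤ d) :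
    ∃ f : MvPolynomial (Fin (n + 1)) K, f.totalDegree ≤ (Fintype.card K - 1) * n + d ∧
      ∀ x, eval x f = (p (Fin.tail x)).eval (x 0) := by
  refine ⟨∑ y, rename Fin.succ (indicator y) * (p y).toMvPolynomial 0, ?_, fun x => ?_⟩
  · refine (totalDegree_finsetSum _ _).trans (Finset.sup_le fun y _ => ?_)
    refine (totalDegree_mul _ _).trans (add_le_add ?_ <|
      ((p y).totalDegree_toMvPolynomial_le 0).trans (hp y))
    simpa using (totalDegree_rename_le _ _).trans (totalDegree_indicator_le y)
  · have hx : x ∘ Fin.succ = Fin.tail x := rfl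
    simp only [map_sum, map_mul, eval_rename, eval_toMvPolynomial, hx]
    rw [Fintype.sum_eq_single (Fin.tail x) fun y hy => by
      rw [eval_indicator_apply_eq_zero _ _ (Ne.symm hy), zero_mul],
      eval_indicator_apply_eq_one, one_mul]

theorem hwt_eval_tail {n : ℕ} (p : (Fin n → K) → Polynomial K) :
    hwt (fun x : Fin (n + 1) → K => (p (Fin.tail x)).eval (x 0)) =
      ∑ y, hwt fun a => (p y).eval a := by
  rw [← hwt_uncurry, ← hwt_comp_equiv _ ((Equiv.prodComm _ _).trans (Fin.consEquiv _))]
  rfl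

theorem exists_natDegree_le_hwt_eval_eq {t d : ℕ}
    (ht : t = 0 ∨ Fintype.card K ≤ t + d ∧ t ≤ Fintype.card K) :
    ∃ p : Polynomial K, p.natDegree ≤ d ∧ (hwt fun a => p.eval a) = t := by
  classical
  rcases ht with rfl | ⟨htd, htq⟩
  · exact ⟨0, by simp, by simp [← Pi.zero_def]⟩
  obtain ⟨T, -, hT⟩ := exists_subset_card_eq (s := (univ : Finset K))
    (n := Fintype.card K - t) (by simp)
  refine ⟨∏ a ∈ T, (Polynomial.X - Polynomial.C a), ?_, ?_⟩
  · rw [Polynomial.natDegree_finsetProd_X_sub_C_eq_card]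
    omega
  · have hsupp : {a | (∏ b ∈ T, (Polynomial.X - Polynomial.C b)).eval a ≠ 0} = ↑Tᶜ := by
      ext a
      simp [Polynomial.eval_prod, prod_eq_zero_iff, sub_eq_zero]
    rw [hwt, hsupp, Set.ncard_coe_finset, card_compl, hT]
    omega

end Construction

theorem Fin.exists_sum_eq_of_le_mul {q r : ℕ} (hq : 2 * r + 3 ≤ q) :
    ∀ {N w : ℕ}, r + 2 ≤ w → w ≤ N * q →
      ∃ t : Fin N → ℕ, (∀ i, t i = 0 ∨ r + 2 ≤ t i ∧ t i ≤ q) ∧ ∑ i, t i = w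
  | 0, w, hw, hwN => by omega
  | N + 1, w, hw, hwN => by
    by_cases hwq : w ≤ q
    · refine ⟨Fin.cons w 0, Fin.cases (by simp [hw, hwq]) (by simp), by simp [Fin.sum_cons]⟩
    have hNq : q ≤ N * q := Nat.le_mul_of_pos_left q (Nat.pos_of_ne_zero fun hN => by simp_all)
    obtain ⟨s, hs⟩ : ∃ s, s = min q (w - (r + 2)) := ⟨_, rfl⟩
    obtain ⟨t, ht, hsum⟩ := exists_sum_eq_of_le_mul hq (N := N) (w := w - s) (by omega)
      (by rw [Nat.add_one_mul] at hwN; omega)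
    refine ⟨Fin.cons s t, Fin.cases (by simp only [Fin.cons_zero]; omega) (by simpa using ht), ?_⟩
    rw [Fin.sum_cons, hsum]
    omega

theorem exists_sum_eq_of_le_card_mul {ι : Type*} [Fintype ι] {q r w : ℕ} (hq : 2 * r + 3 ≤ q)
    (hw : r + 2 ≤ w) (hwq : w ≤ Fintype.card ι * q) :
    ∃ t : ι → ℕ, (∀ i, t i = 0 ∨ r + 2 ≤ t i ∧ t i ≤ q) ∧ ∑ i, t i = w := by
  obtain ⟨t, ht, hsum⟩ := Fin.exists_sum_eq_of_le_mul hq hw hwq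
  exact ⟨t ∘ Fintype.equivFin ι, fun i => ht _, by
    rw [← hsum]; exact Fintype.sum_equiv _ _ _ fun _ => rfl⟩

section ReedMuller

variable {K : Type*} [Field K] [Fintype K]

theorem hwt_mem_of_mem_RMcode {s m r : ℕ} {c : (Fin m → K) → K}
    (hs : s + r < (Fintype.card K - 1) * m) (hc : c ∈ RMcode K s m) :
    hwt c ∈ {0} ∪ Set.Icc (r + 2) (Fintype.card K ^ m) := by
  obtain ⟨f, hf, hfc⟩ := hc
  obtain rfl : (fun x => eval x f) = c := funext hfc
  by_cases hzero : ∃ P, eval P f ≠ 0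
  · have := card_sub_one_mul_lt_totalDegree_add_hwt f hzero
    rw [Fintype.card_fin] at this
    exact Or.inr ⟨by omega, (hwt_le_card _).trans_eq (by simp)⟩
  · simp only [not_exists, not_not] at hzero
    exact Or.inl (by simp [hzero, ← Pi.zero_def])

theorem exists_mem_RMcode_hwt_eq_sum {k d : ℕ} (t : (Fin k → K) → ℕ)
    (ht : ∀ y, t y = 0 ∨ Fintype.card K ≤ t y + d ∧ t y ≤ Fintype.card K) :
    ∃ c ∈ RMcode K ((Fintype.card K - 1) * k + d) (k + 1), hwt c = ∑ y, t y := by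
  choose p hpdeg hpwt using fun y => exists_natDegree_le_hwt_eval_eq (ht y)
  obtain ⟨f, hf, hfeval⟩ := exists_eval_eq_eval_tail p hpdeg
  exact ⟨_, ⟨f, hf, fun _ => rfl⟩, by simp_rw [hfeval, hwt_eval_tail, hpwt]⟩

end ReedMuller

/-- For `m ≥ 1` and `0 ≤ r ≤ (q-3)/2` (i.e. `2r + 3 ≤ q`), the weight set of
`RM_q(m(q-1)-r-1, m)` equals `{0} ∪ {r+2, r+3, …, q^m}`. -/
theorem stmt12 {F : Type*} [Field F] [Fintype F]
    (q : ℕ) (hq : q = Fintype.card F)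
    (m r : ℕ) (hm : 1 ≤ m) (hr : 2 * r + 3 ≤ q) :
    {w : ℕ | ∃ c ∈ RMcode F (m * (q - 1) - r - 1) m, hwt c = w}
      = {0} ∪ Set.Icc (r + 2) (q ^ m) := by
  subst hq
  obtain ⟨k, rfl⟩ := Nat.exists_eq_add_one_of_ne_zero (by omega : m ≠ 0)
  have hdeg : (k + 1) * (Fintype.card F - 1) - r - 1
      = (Fintype.card F - 1) * k + (Fintype.card F - (r + 2)) := by
    rw [Nat.add_one_mul, mul_comm]
    omega
  ext w
  constructor
  · rintro ⟨c, hc, rfl⟩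
    rw [hdeg] at hc
    exact hwt_mem_of_mem_RMcode (by rw [Nat.mul_add_one]; omega) hc
  · rintro (rfl | ⟨hw, hwq⟩)
    · exact ⟨0, ⟨0, by simp, by simp⟩, hwt_zero⟩
    · obtain ⟨t, ht, rfl⟩ := exists_sum_eq_of_le_card_mul (ι := Fin k → F) hr hw
        (by simpa [pow_succ] using hwq)
      rw [hdeg]
      exact exists_mem_RMcode_hwt_eq_sum t fun y => (ht y).imp_right fun h => ⟨by omega, h.2⟩
end
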